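/- Let α ∈ ℝ and β ≥ 0. For ξ ∈ ℤ₊ⁿ put U(ξ) := (αE + βA)ξ, Q(ξ) := ½⟨(αE + βA)ξ, ξ⟩, and q_ξ := Σ_{i=1}^n (e^{U_i(ξ)} + 1_{ξᵢ > 0}). Then for every nonzero ξ ∈ ℤ₊ⁿ, Σ_{i=1}^n [ e^{U_i(ξ)} (Q(ξ + eᵢ) − Q(ξ)) + 1_{ξᵢ > 0} (Q(ξ − eᵢ) − Q(ξ)) ] ≥ q_ξ · ( Ψ(U(ξ))/Φ(U(ξ)) + α/2 ), where Φ(u) := Σᵢ (e^{uᵢ} + 1) and Ψ(u) := Σᵢ uᵢ(e^{uᵢ} − 1). -/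

import Mathlib

/-!
Since `αE + βA` is symmetric with diagonal `α`, moving `ξ` by `±eᵢ` changes `Q` by `±Uᵢ + α/2`,
so the drift equals `Σᵢ Uᵢ (e^{Uᵢ} − 1_{ξᵢ>0}) + q_ξ α/2`. Every term `u (e^u − 1)` is
nonnegative, and where `ξᵢ = 0` we have `Uᵢ ≥ 0` because `β ≥ 0`; hence
`Σᵢ Uᵢ (e^{Uᵢ} − 1_{ξᵢ>0}) ≥ Ψ(U) ≥ (q_ξ / Φ(U)) Ψ(U)`, using `q_ξ ≤ Φ(U)`.
-/

open Finset Real Matrix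

/-- `U(ξ) = (αE + βA)ξ`, the gradient of `Q`. -/
noncomputable def U {n : ℕ} (G : SimpleGraph (Fin n)) [DecidableRel G.Adj]
    (α β : ℝ) (ξ : Fin n → ℕ) : Fin n → ℝ :=
  (α • (1 : Matrix (Fin n) (Fin n) ℝ) + β • G.adjMatrix ℝ).mulVec fun j => (ξ j : ℝ)

/-- `Q(ξ) = ½⟨(αE + βA)ξ, ξ⟩`. -/
noncomputable def Q {n : ℕ} (G : SimpleGraph (Fin n)) [DecidableRel G.Adj]
    (α β : ℝ) (ξ : Fin n → ℕ) : ℝ :=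
  1 / 2 * ((α • (1 : Matrix (Fin n) (Fin n) ℝ) + β • G.adjMatrix ℝ).mulVec
      (fun j => (ξ j : ℝ)) ⬝ᵥ fun j => (ξ j : ℝ))

theorem Matrix.IsSymm.mulVec_add_single_dotProduct {ι R : Type*} [Fintype ι] [DecidableEq ι]
    [CommSemiring R] {M : Matrix ι ι R} (hM : M.IsSymm) (x : ι → R) (i : ι) (c : R) :
    M *ᵥ (x + Pi.single i c) ⬝ᵥ (x + Pi.single i c)
      = M *ᵥ x ⬝ᵥ x + 2 * c * (M *ᵥ x) i + c ^ 2 * M i i := by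
  have hcross : M *ᵥ Pi.single i c ⬝ᵥ x = (M *ᵥ x) i * c := by
    rw [dotProduct_comm, dotProduct_mulVec, ← vecMul_transpose, hM.eq, dotProduct_single]
  rw [mulVec_add, add_dotProduct, dotProduct_add, dotProduct_add, hcross, dotProduct_single,
    mulVec_single, dotProduct_single]
  simp only [Pi.smul_apply, col_apply, MulOpposite.smul_eq_mul_unop, MulOpposite.unop_op]
  ring

theorem natCast_update_eq_add_single {ι : Type*} [DecidableEq ι] (ξ : ι → ℕ) (i : ι)
    (m : ℕ) :
    (fun j => (Function.update ξ i m j : ℝ)) = (fun j => (ξ j : ℝ)) + Pi.single i (m - ξ i : ℝ) := by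
  ext j
  rcases eq_or_ne j i with rfl | hj
  · simp
  · simp [hj]

section Drift

variable {n : ℕ} (G : SimpleGraph (Fin n)) [DecidableRel G.Adj] (α β : ℝ)

theorem isSymm_smul_one_add_smul_adjMatrix :
    (α • (1 : Matrix (Fin n) (Fin n) ℝ) + β • G.adjMatrix ℝ).IsSymm :=
  (isSymm_one.smul α).add (G.isSymm_adjMatrix.smul β)

theorem Q_update_sub (ξ : Fin n → ℕ) (i : Fin n) (m : ℕ) :
    Q G α β (Function.update ξ i m) - Q G α β ξ
      = (m - ξ i : ℝ) * U G α β ξ i + (m - ξ i : ℝ) ^ 2 * α / 2 := by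
  have hdiag : (α • (1 : Matrix (Fin n) (Fin n) ℝ) + β • G.adjMatrix ℝ) i i = α := by simp
  rw [Q, Q, U, natCast_update_eq_add_single,
    (isSymm_smul_one_add_smul_adjMatrix G α β).mulVec_add_single_dotProduct, hdiag]
  ring

theorem Q_update_succ_sub (ξ : Fin n → ℕ) (i : Fin n) :
    Q G α β (Function.update ξ i (ξ i + 1)) - Q G α β ξ = U G α β ξ i + α / 2 := by
  rw [Q_update_sub]; push_cast; ring

theorem Q_update_pred_sub (ξ : Fin n → ℕ) (i : Fin n) (hi : 0 < ξ i) :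
    Q G α β (Function.update ξ i (ξ i - 1)) - Q G α β ξ = -U G α β ξ i + α / 2 := by
  rw [Q_update_sub, Nat.cast_sub hi]; push_cast; ring

theorem U_nonneg_of_eq_zero (hβ : 0 ≤ β) (ξ : Fin n → ℕ) (i : Fin n) (hi : ξ i = 0) :
    0 ≤ U G α β ξ i := by
  rw [U, add_mulVec, smul_mulVec, smul_mulVec, one_mulVec, Pi.add_apply, Pi.smul_apply,
    Pi.smul_apply, hi, G.adjMatrix_mulVec_apply]
  simp only [Nat.cast_zero, smul_eq_mul, mul_zero, zero_add]
  exact mul_nonneg hβ (sum_nonneg fun j _ => Nat.cast_nonneg _)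

theorem sum_drift_eq (ξ : Fin n → ℕ) :
    ∑ i, (exp (U G α β ξ i) * (Q G α β (Function.update ξ i (ξ i + 1)) - Q G α β ξ)
        + (if 0 < ξ i then (1 : ℝ) else 0) * (Q G α β (Function.update ξ i (ξ i - 1)) - Q G α β ξ))
      = ∑ i, U G α β ξ i * (exp (U G α β ξ i) - if 0 < ξ i then 1 else 0)
        + (∑ i, (exp (U G α β ξ i) + if 0 < ξ i then 1 else 0)) * (α / 2) := by
  rw [sum_mul, ← sum_add_distrib]
  refine sum_congr rfl fun i _ => ?_
  rw [Q_update_succ_sub]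
  split_ifs with hi
  · rw [Q_update_pred_sub G α β ξ i hi]; ring
  · ring

end Drift

theorem mul_exp_sub_one_nonneg (x : ℝ) : 0 ≤ x * (exp x - 1) := by
  rcases le_total 0 x with hx | hx
  · exact mul_nonneg hx (sub_nonneg.2 (one_le_exp hx))
  · exact mul_nonneg_of_nonpos_of_nonpos hx (sub_nonpos.2 (exp_le_one_iff.2 hx))

theorem sum_exp_add_indicator_mul_div_le {ι : Type*} [Fintype ι] (u : ι → ℝ) (p : ι → Prop)
    [DecidablePred p] (hu : ∀ i, ¬p i → 0 ≤ u i) :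
    (∑ i, (exp (u i) + if p i then 1 else 0))
        * ((∑ i, u i * (exp (u i) - 1)) / ∑ i, (exp (u i) + 1))
      ≤ ∑ i, u i * (exp (u i) - if p i then 1 else 0) := by
  set Ψ := ∑ i, u i * (exp (u i) - 1)
  have hΨ : 0 ≤ Ψ := sum_nonneg fun i _ => mul_exp_sub_one_nonneg (u i)
  have hq : (∑ i, (exp (u i) + if p i then 1 else 0)) ≤ ∑ i, (exp (u i) + 1) :=
    sum_le_sum fun i _ => by split_ifs <;> norm_num
  have hΦ : 0 ≤ ∑ i, (exp (u i) + 1) := sum_nonneg fun i _ => by positivity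
  have hΨP : Ψ ≤ ∑ i, u i * (exp (u i) - if p i then 1 else 0) :=
    sum_le_sum fun i _ => by
      split_ifs with hi
      · rfl
      · nlinarith [hu i hi]
  calc _ = Ψ * ((∑ i, (exp (u i) + if p i then 1 else 0)) / ∑ i, (exp (u i) + 1)) := by ring
    _ ≤ Ψ * 1 := mul_le_mul_of_nonneg_left (div_le_one_of_le₀ hq hΦ) hΨ
    _ ≤ _ := by rw [mul_one]; exact hΨP

theorem stmt12_general {n : ℕ} (G : SimpleGraph (Fin n)) [DecidableRel G.Adj]
    (α β : ℝ) (hβ : 0 ≤ β) (ξ : Fin n → ℕ) :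
    (∑ i, (Real.exp (U G α β ξ i)
          * (Q G α β (Function.update ξ i (ξ i + 1)) - Q G α β ξ)
        + (if 0 < ξ i then (1 : ℝ) else 0)
          * (Q G α β (Function.update ξ i (ξ i - 1)) - Q G α β ξ)))
      ≥ (∑ i, (Real.exp (U G α β ξ i) + if 0 < ξ i then (1 : ℝ) else 0))
        * ((∑ i, U G α β ξ i * (Real.exp (U G α β ξ i) - 1))
            / (∑ i, (Real.exp (U G α β ξ i) + 1))
          + α / 2) := by
  have hratio := sum_exp_add_indicator_mul_div_le (U G α β ξ) (fun i => 0 < ξ i)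
    fun i hi => U_nonneg_of_eq_zero G α β hβ ξ i (Nat.eq_zero_of_not_pos hi)
  rw [ge_iff_le, sum_drift_eq, mul_add]
  linarith

/-- For `β ≥ 0` and nonzero `ξ ∈ ℤ₊ⁿ`, the (unnormalised) one-step drift of `Q` satisfies
`Σᵢ [e^{Uᵢ(ξ)}(Q(ξ+eᵢ)−Q(ξ)) + 1_{ξᵢ>0}(Q(ξ−eᵢ)−Q(ξ))] ≥ q_ξ (Ψ(U(ξ))/Φ(U(ξ)) + α/2)`,
where `q_ξ = Σᵢ (e^{Uᵢ(ξ)} + 1_{ξᵢ>0})`, `Φ(u) = Σᵢ (e^{uᵢ}+1)`, `Ψ(u) = Σᵢ uᵢ(e^{uᵢ}−1)`. -/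
theorem stmt12 {n : ℕ} (G : SimpleGraph (Fin n)) [DecidableRel G.Adj]
    (α β : ℝ) (hβ : 0 ≤ β) (ξ : Fin n → ℕ) (hξ : ξ ≠ 0) :
    (∑ i, (Real.exp (U G α β ξ i)
          * (Q G α β (Function.update ξ i (ξ i + 1)) - Q G α β ξ)
        + (if 0 < ξ i then (1 : ℝ) else 0)
          * (Q G α β (Function.update ξ i (ξ i - 1)) - Q G α β ξ)))
      ≥ (∑ i, (Real.exp (U G α β ξ i) + if 0 < ξ i then (1 : ℝ) else 0))
        * ((∑ i, U G α β ξ i * (Real.exp (U G α β ξ i) - 1))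
            / (∑ i, (Real.exp (U G α β ξ i) + 1))
          + α / 2) :=
  stmt12_general G α β hβ ξ
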